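/- If P is a local Markov chain that is reversible with respect to the Gibbs distribution μ (i.e., P_{x,x^i} = P_{x^i,x}·e^{-∇_i H(x)} for all x ∈ S and i ∈ V), then for every Λ ⊆ V, LP_{Λ,DLR} ⊆ LP_{Λ,MC}. Consequently, for every f supported on Λ: min{ν(f) : ν ∈ LP_{Λ,MC}} ≤ min{ν(f) : ν ∈ LP_{Λ,DLR}} and max{ν(f) : ν ∈ LP_{Λ,DLR}} ≤ max{ν(f) : ν ∈ LP_{Λ,MC}}. -/

import Mathlib

namespace GibbsLP

variable {V : Type*} [Fintype V] [DecidableEq V]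

/-- Spin configurations on the vertex set `V`; the two spin values `-1, +1` are
encoded by the two-element type `Bool`. -/
abbrev Config (V : Type*) := V → Bool

/-- The configuration `x` with the spin at site `i` flipped (denoted `xⁱ` in the paper). -/
def flip (x : Config V) (i : V) : Config V := Function.update x i (!x i)

/-- Discrete gradient `∇ᵢ f (x) = f(xⁱ) - f(x)`. -/
def grad (f : Config V → ℝ) (i : V) (x : Config V) : ℝ := f (flip x i) - f x

/-- `f` depends only on the spins in `Λ`, i.e. `supp f ⊆ Λ`. -/
def SupportedOn (f : Config V → ℝ) (Λ : Set V) : Prop :=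
  ∀ i ∉ Λ, ∀ x, f (flip x i) = f x

/-- The support `supp f = {i : ∇ᵢ f ≠ 0}` of an observable. -/
def sptSet (f : Config V → ℝ) : Set V := {i | ∃ x, f (flip x i) ≠ f x}

/-- Sup norm of an observable. -/
noncomputable def supNorm {α : Type*} (f : α → ℝ) : ℝ := ⨆ x, |f x|

/-- The Hamiltonian `H(x) = β ∑_{{i,j} ∈ E} h_{ij}(x_i, x_j)`; each unordered edge is
counted once (hence the factor `1/2` for the ordered double sum). -/
noncomputable def ham (G : SimpleGraph V) [DecidableRel G.Adj] (β : ℝ)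
    (h : V → V → Bool → Bool → ℝ) (x : Config V) : ℝ :=
  β * ((1 : ℝ) / 2 * ∑ i : V, ∑ j : V, if G.Adj i j then h i j (x i) (x j) else 0)

/-- The Gibbs distribution `μ(x) = e^{-H(x)} / Z`. -/
noncomputable def gibbs (H : Config V → ℝ) (x : Config V) : ℝ :=
  Real.exp (-H x) / ∑ y : Config V, Real.exp (-H y)

/-- `ν` is a probability distribution. -/
def IsDist {α : Type*} [Fintype α] (ν : α → ℝ) : Prop :=
  (∀ a, 0 ≤ ν a) ∧ ∑ a, ν a = 1

/-- Spin configurations on a subset `A ⊆ V`. -/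
abbrev SubConfig {V : Type*} (A : Finset V) := {i : V // i ∈ A} → Bool

/-- Restriction of a configuration to `A`. -/
def restrict (A : Finset V) (x : Config V) : SubConfig A := fun i => x i.1

/-- Extension of a configuration on `A` to all of `V` (by an arbitrary fixed value outside). -/
def extendC (A : Finset V) (y : SubConfig A) : Config V :=
  fun i => if h : i ∈ A then y ⟨i, h⟩ else true

/-- Flip the spin of `y : SubConfig A` at site `i` (identity if `i ∉ A`). -/
def flipAt (A : Finset V) (y : SubConfig A) (i : V) : SubConfig A :=
  fun j => if j.1 = i then !(y j) else y j

/-- External boundary `∂ᵉˣ Λ = {j ∉ Λ : ∃ i ∈ Λ, {i,j} ∈ E}`. -/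
def extBoundary (G : SimpleGraph V) [DecidableRel G.Adj] (Λ : Finset V) : Finset V :=
  Finset.univ.filter fun j => j ∉ Λ ∧ ∃ i ∈ Λ, G.Adj i j

/-- External boundary of a set of vertices (set version). -/
def extBoundarySet (G : SimpleGraph V) (A : Set V) : Set V :=
  {j | j ∉ A ∧ ∃ i ∈ A, G.Adj i j}

/-- `Λ̄ = Λ ∪ ∂ᵉˣ Λ`. -/
def closure (G : SimpleGraph V) [DecidableRel G.Adj] (Λ : Finset V) : Finset V :=
  Λ ∪ extBoundary G Λ

/-- `∇ᵢ H` evaluated on a configuration on `A` (well defined for `i ∈ Λ`, `A = Λ̄`, since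
then `∇ᵢ H` only depends on the spins in `Λ̄`). -/
noncomputable def gradH (A : Finset V) (H : Config V → ℝ) (i : V) (y : SubConfig A) : ℝ :=
  H (flip (extendC A y) i) - H (extendC A y)

/-- Expectation `ν(f)` of an observable `f` supported in `A` under a distribution `ν` on
`Σ^A`. -/
noncomputable def lexp {A : Finset V} (ν : SubConfig A → ℝ) (f : Config V → ℝ) : ℝ :=
  ∑ y : SubConfig A, ν y * f (extendC A y)

/-- The DLR linear program: distributions on `Σ^{Λ̄}` satisfying the local spin-flip
equations `ν(y) = ν(yⁱ) e^{∇ᵢH(y)}` for all `y` and `i ∈ Λ`. -/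
def LPdlr (G : SimpleGraph V) [DecidableRel G.Adj] (H : Config V → ℝ) (Λ : Finset V) :
    Set (SubConfig (closure G Λ) → ℝ) :=
  {ν | IsDist ν ∧ ∀ y, ∀ i ∈ Λ,
      ν y = ν (flipAt (closure G Λ) y i) * Real.exp (gradH (closure G Λ) H i y)}

/-- Values `ν(f)` over feasible points `ν` of the DLR linear program. -/
def dlrVals (G : SimpleGraph V) [DecidableRel G.Adj] (H : Config V → ℝ) (Λ : Finset V)
    (f : Config V → ℝ) : Set ℝ :=
  {t | ∃ ν ∈ LPdlr G H Λ, t = lexp ν f}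

/-- Marginal of a distribution `μ` on `Σ^V` on the sites in `A`. -/
noncomputable def marg (A : Finset V) (μ : Config V → ℝ) : SubConfig A → ℝ :=
  fun y => ∑ x : Config V, if restrict A x = y then μ x else 0

/-- The Hamiltonian truncated to `Λ` with boundary condition `η` on `∂ᵉˣ Λ`. -/
noncomputable def hamLoc (G : SimpleGraph V) [DecidableRel G.Adj] (β : ℝ)
    (h : V → V → Bool → Bool → ℝ) (Λ : Finset V)
    (η : SubConfig (extBoundary G Λ)) (x : SubConfig Λ) : ℝ :=
  β * ((1 : ℝ) / 2 * (∑ i ∈ Λ.attach, ∑ j ∈ Λ.attach,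
        if G.Adj i.1 j.1 then h i.1 j.1 (x i) (x j) else 0)
    + ∑ i ∈ Λ.attach, ∑ j ∈ (extBoundary G Λ).attach,
        if G.Adj i.1 j.1 then h i.1 j.1 (x i) (η j) else 0)

/-- The local Gibbs state `μ_Λ^η` on `Λ` with boundary condition `η`. -/
noncomputable def gibbsLoc (G : SimpleGraph V) [DecidableRel G.Adj] (β : ℝ)
    (h : V → V → Bool → Bool → ℝ) (Λ : Finset V)
    (η : SubConfig (extBoundary G Λ)) (x : SubConfig Λ) : ℝ :=
  Real.exp (-(hamLoc G β h Λ η x)) /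
    ∑ x' : SubConfig Λ, Real.exp (-(hamLoc G β h Λ η x'))

/-- Expectation `μ_Λ^η(f)` of an observable supported in `Λ` under the local Gibbs state. -/
noncomputable def gibbsLocExp (G : SimpleGraph V) [DecidableRel G.Adj] (β : ℝ)
    (h : V → V → Bool → Bool → ℝ) (Λ : Finset V)
    (η : SubConfig (extBoundary G Λ)) (f : Config V → ℝ) : ℝ :=
  ∑ x : SubConfig Λ, gibbsLoc G β h Λ η x * f (extendC Λ x)

/-- Combine `x ∈ Σ^Λ` and `η ∈ Σ^{∂ᵉˣΛ}` into a configuration `(x, η) ∈ Σ^{Λ̄}`. -/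
def glue (G : SimpleGraph V) [DecidableRel G.Adj] (Λ : Finset V)
    (x : SubConfig Λ) (η : SubConfig (extBoundary G Λ)) : SubConfig (closure G Λ) :=
  fun i => if h : i.1 ∈ Λ then x ⟨i.1, h⟩
    else η ⟨i.1, by
      have hi := i.2
      simp only [closure, Finset.mem_union] at hi
      tauto⟩

/-- A local (single-site, finite-range, bounded-rate) Markov chain on `Σ^V`. -/
structure IsLocalMC (G : SimpleGraph V) (P : Config V → Config V → ℝ) : Prop where
  nonneg : ∀ x x', 0 ≤ P x x'
  rowSum : ∀ x, ∑ x', P x x' = 1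
  /-- `P_{x,x'} = 0` if `x'` differs from `x` on more than one site. -/
  singleSite : ∀ x x', x' ≠ x → (∀ i, x' ≠ flip x i) → P x x' = 0
  /-- `P_{x,xⁱ}` only depends on the spins in the closed neighborhood of `i`. -/
  locality : ∀ i : V, ∀ x x' : Config V, x i = x' i →
      (∀ j, G.Adj i j → x j = x' j) → P x (flip x i) = P x' (flip x' i)
  /-- `P_{x,x'} ≤ 1/n` off the diagonal. -/
  bounded : ∀ x x', x ≠ x' → P x x' ≤ 1 / (Fintype.card V : ℝ)

/-- The Markov-chain linear program: distributions on `Σ^{Λ̄}` satisfying the stationarity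
equations `ν(Pg) = ν(g)` for all `g` supported on `Λ`. -/
def LPmc (G : SimpleGraph V) [DecidableRel G.Adj] (P : Config V → Config V → ℝ)
    (Λ : Finset V) : Set (SubConfig (closure G Λ) → ℝ) :=
  {ν | IsDist ν ∧ ∀ g : Config V → ℝ, SupportedOn g ↑Λ →
      lexp ν ((Matrix.of P).mulVec g) = lexp ν g}

/-- Values `ν(f)` over feasible points `ν` of the Markov-chain linear program. -/
def mcVals (G : SimpleGraph V) [DecidableRel G.Adj] (P : Config V → Config V → ℝ)
    (Λ : Finset V) (f : Config V → ℝ) : Set ℝ :=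
  {t | ∃ ν ∈ LPmc G P Λ, t = lexp ν f}

/-- The heat-bath dynamics: site `i` is flipped with probability
`c(i,x) = e^{-∇ᵢH(x)} / (1 + e^{-∇ᵢH(x)})`, each site being selected with probability `1/n`. -/
noncomputable def heatBath (H : Config V → ℝ) (x x' : Config V) : ℝ :=
  if x' = x then
    1 - (∑ i : V, Real.exp (-(grad H i x)) / (1 + Real.exp (-(grad H i x)))) /
      (Fintype.card V : ℝ)
  else
    ∑ i : V, if x' = flip x i then
      (Real.exp (-(grad H i x)) / (1 + Real.exp (-(grad H i x)))) / (Fintype.card V : ℝ)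
    else 0

/-- Marginal on `Σ^A` of a distribution on `Σ^B`, for `A ⊆ B`. -/
noncomputable def margTo {A B : Finset V} (hAB : A ⊆ B) (ν : SubConfig B → ℝ) :
    SubConfig A → ℝ :=
  fun z => ∑ y : SubConfig B,
    if (fun i : {i : V // i ∈ A} => y ⟨i.1, hAB i.2⟩) = z then ν y else 0

theorem closure_mono (G : SimpleGraph V) [DecidableRel G.Adj] {Λ Λ' : Finset V}
    (hs : Λ ⊆ Λ') : closure G Λ ⊆ closure G Λ' := by
  intro j hj
  simp only [closure, Finset.mem_union, extBoundary, Finset.mem_filter, Finset.mem_univ,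
    true_and] at hj ⊢
  by_cases hjΛ' : j ∈ Λ'
  · exact Or.inl hjΛ'
  · rcases hj with hj | ⟨hjn, i, hiΛ, hadj⟩
    · exact absurd (hs hj) hjΛ'
    · exact Or.inr ⟨hjΛ', i, hs hiΛ, hadj⟩

/-!
Since `P` only makes single flips and its rows sum to one, `Pg = g + ∑ᵢ P_{x,xⁱ} ∇ᵢg`, so
stationarity `ν(Pg) = ν(g)` for `g` supported on `Λ` says that for each `i ∈ Λ` the flux
`∑_y ν(y) P_{y,yⁱ} ∇ᵢg(y)` vanishes. Detailed balance of `ν` together with reversibility of `P`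
makes this summand change sign under the involution `y ↦ yⁱ`, so the flux is zero. For the
bounds, the DLR program is feasible and all values `ν(f)` lie in `[-∑|f|, ∑|f|]`, so the
infimum and supremum compare through the inclusion of the value sets.
-/

lemma IsDist.le_one {α : Type*} [Fintype α] {ν : α → ℝ} (hν : IsDist ν) (a : α) : ν a ≤ 1 :=
  hν.2 ▸ Finset.single_le_sum (fun b _ => hν.1 b) (Finset.mem_univ a)

lemma sum_eq_zero_of_involutive_of_antisymm {α : Type*} [Fintype α] {σ : α → α}
    (hσ : Function.Involutive σ) {F : α → ℝ} (hF : ∀ a, F (σ a) = -F a) : ∑ a, F a = 0 := by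
  have hsum : ∑ a, F (σ a) = ∑ a, F a := Equiv.sum_comp (hσ.toPerm σ) F
  simp only [hF, Finset.sum_neg_distrib] at hsum
  linarith

section

omit [Fintype V]

lemma flip_apply (x : Config V) (i j : V) :
    flip x i j = if j = i then !(x i) else x j := by
  simp [flip, Function.update_apply]

lemma flip_flip (x : Config V) (i : V) : flip (flip x i) i = x := by
  funext j
  by_cases hj : j = i <;> simp [flip_apply, hj]

lemma flip_injective (x : Config V) : Function.Injective (flip x) := by
  intro i j hij
  by_contra hne
  simpa [flip_apply, hne] using congrFun hij i

lemma flipAt_involutive (A : Finset V) (i : V) :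
    Function.Involutive fun y : SubConfig A => flipAt A y i := by
  intro y
  funext j
  by_cases hj : j.1 = i <;> simp [flipAt, hj]

lemma extendC_flipAt {A : Finset V} (y : SubConfig A) {i : V} (hi : i ∈ A) :
    extendC A (flipAt A y i) = flip (extendC A y) i := by
  funext j
  by_cases hj : j = i
  · subst hj
    simp [extendC, flip_apply, flipAt, hi]
  · by_cases hjA : j ∈ A <;> simp [extendC, flip_apply, flipAt, hj, hjA]

lemma abs_lexp_le {A : Finset V} {ν : SubConfig A → ℝ} (hν : IsDist ν) (f : Config V → ℝ) :
    |lexp ν f| ≤ ∑ y, |f (extendC A y)| :=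
  calc |lexp ν f| ≤ ∑ y, |ν y * f (extendC A y)| := Finset.abs_sum_le_sum_abs _ _
    _ ≤ ∑ y, |f (extendC A y)| := Finset.sum_le_sum fun y _ => by
        rw [abs_mul, abs_of_nonneg (hν.1 y)]
        exact mul_le_of_le_one_left (abs_nonneg _) (hν.le_one y)

/-- Detailed balance of `ν` and reversibility of `P` make the summand antisymmetric under
`y ↦ yⁱ`. -/
lemma sum_mul_flux_eq_zero {A : Finset V} {H : Config V → ℝ} {P : Config V → Config V → ℝ}
    {ν : SubConfig A → ℝ} {i : V} (hi : i ∈ A)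
    (hν : ∀ y, ν y = ν (flipAt A y i) * Real.exp (gradH A H i y))
    (hrev : ∀ x, P x (flip x i) = P (flip x i) x * Real.exp (-(grad H i x)))
    (g : Config V → ℝ) :
    ∑ y, ν y * (P (extendC A y) (flip (extendC A y) i) * grad g i (extendC A y)) = 0 := by
  refine sum_eq_zero_of_involutive_of_antisymm (flipAt_involutive A i) fun y => ?_
  have hexp : Real.exp (gradH A H i y) * Real.exp (-(grad H i (extendC A y))) = 1 := by
    rw [← Real.exp_add, gradH, grad, add_neg_cancel, Real.exp_zero]
  simp only [extendC_flipAt y hi, flip_flip, grad]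
  rw [hν y, hrev]
  linear_combination (ν (flipAt A y i) * P (flip (extendC A y) i) (extendC A y) *
    (g (flip (extendC A y) i) - g (extendC A y))) * hexp

end

lemma gibbs_isDist (H : Config V → ℝ) : IsDist (gibbs H) := by
  have hZ : 0 < ∑ y, Real.exp (-H y) :=
    Finset.sum_pos (fun y _ => Real.exp_pos _) Finset.univ_nonempty
  refine ⟨fun x => div_nonneg (Real.exp_pos _).le hZ.le, ?_⟩
  simp only [gibbs, ← Finset.sum_div, div_self hZ.ne']

lemma mulVec_eq_add_sum_grad {G : SimpleGraph V} {P : Config V → Config V → ℝ}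
    (hP : IsLocalMC G P) (g : Config V → ℝ) (x : Config V) :
    (Matrix.of P).mulVec g x = g x + ∑ i, P x (flip x i) * grad g i x := by
  have hjumps : ∑ x', P x x' * (g x' - g x) = ∑ i, P x (flip x i) * grad g i x :=
    calc ∑ x', P x x' * (g x' - g x)
      _ = ∑ x' ∈ Finset.univ.image (flip x), P x x' * (g x' - g x) := by
          refine (Finset.sum_subset (Finset.subset_univ _) fun x' _ hx' => ?_).symm
          by_cases hxx : x' = x
          · simp [hxx]
          · rw [hP.singleSite x x' hxx fun i hi => hx' (by simp [hi]), zero_mul]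
      _ = ∑ i, P x (flip x i) * grad g i x :=
          Finset.sum_image fun i _ j _ hij => flip_injective x hij
  calc (Matrix.of P).mulVec g x = ∑ x', (P x x' * (g x' - g x) + P x x' * g x) := by
        simp only [Matrix.mulVec, dotProduct, Matrix.of_apply, mul_sub, sub_add_cancel]
    _ = g x + ∑ i, P x (flip x i) * grad g i x := by
        rw [Finset.sum_add_distrib, ← Finset.sum_mul, hP.rowSum x, one_mul, hjumps, add_comm]

theorem LPdlr_subset_LPmc_of_reversible (G : SimpleGraph V) [DecidableRel G.Adj]
    (H : Config V → ℝ) {P : Config V → Config V → ℝ} (hP : IsLocalMC G P)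
    (hrev : ∀ x i, P x (flip x i) = P (flip x i) x * Real.exp (-(grad H i x)))
    (Λ : Finset V) : LPdlr G H Λ ⊆ LPmc G P Λ := by
  rintro ν ⟨hdist, hbal⟩
  refine ⟨hdist, fun g hg => ?_⟩
  set e := extendC (closure G Λ)
  have hflux : ∑ y, ν y * ∑ i, P (e y) (flip (e y) i) * grad g i (e y) = 0 := by
    simp only [Finset.mul_sum]
    rw [Finset.sum_comm, ← Finset.sum_subset (Finset.subset_univ Λ)]
    · exact Finset.sum_eq_zero fun i hi =>
        sum_mul_flux_eq_zero (Finset.mem_union_left _ hi) (hbal · i hi) (hrev · i) g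
    · intro i _ hiΛ
      exact Finset.sum_eq_zero fun y _ => by rw [grad, hg i hiΛ, sub_self, mul_zero, mul_zero]
  simp only [lexp, mulVec_eq_add_sum_grad hP, mul_add, Finset.sum_add_distrib]
  rw [hflux, add_zero]

/-- A feasible point because the DLR equations also read `∇ᵢH` through `extendC`. -/
lemma gibbs_comp_extendC_mem_LPdlr (G : SimpleGraph V) [DecidableRel G.Adj]
    (H : Config V → ℝ) (Λ : Finset V) :
    gibbs (fun y => H (extendC (closure G Λ) y)) ∈ LPdlr G H Λ := by
  refine ⟨gibbs_isDist _, fun y i hi => ?_⟩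
  rw [gibbs, gibbs, extendC_flipAt y (Finset.mem_union_left _ hi), gradH, div_mul_eq_mul_div,
    ← Real.exp_add]
  ring_nf

lemma isBounded_mcVals (G : SimpleGraph V) [DecidableRel G.Adj] (P : Config V → Config V → ℝ)
    (Λ : Finset V) (f : Config V → ℝ) : Bornology.IsBounded (mcVals G P Λ f) := by
  refine isBounded_iff_forall_norm_le.2 ⟨∑ y, |f (extendC (closure G Λ) y)|, ?_⟩
  rintro t ⟨ν, hν, rfl⟩
  exact abs_lexp_le hν.1 f

lemma dlrVals_subset_mcVals {G : SimpleGraph V} [DecidableRel G.Adj] {H : Config V → ℝ}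
    {P : Config V → Config V → ℝ} {Λ : Finset V} (hsub : LPdlr G H Λ ⊆ LPmc G P Λ)
    (f : Config V → ℝ) : dlrVals G H Λ f ⊆ mcVals G P Λ f := by
  rintro t ⟨ν, hν, rfl⟩
  exact ⟨ν, hsub hν, rfl⟩

theorem LPdlr_subset_LPmc_general (G : SimpleGraph V) [DecidableRel G.Adj]
    (β : ℝ) (h : V → V → Bool → Bool → ℝ)
    (P : Config V → Config V → ℝ) (hP : IsLocalMC G P)
    (hrev : ∀ (x : Config V) (i : V),
      P x (flip x i) = P (flip x i) x * Real.exp (-(grad (ham G β h) i x)))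
    (Λ : Finset V) :
    LPdlr G (ham G β h) Λ ⊆ LPmc G P Λ ∧
    ∀ f : Config V → ℝ, SupportedOn f ↑Λ →
      sInf (mcVals G P Λ f) ≤ sInf (dlrVals G (ham G β h) Λ f) ∧
      sSup (dlrVals G (ham G β h) Λ f) ≤ sSup (mcVals G P Λ f) := by
  have hsub := LPdlr_subset_LPmc_of_reversible G (ham G β h) hP hrev Λ
  refine ⟨hsub, fun f _ => ?_⟩
  have hvals := dlrVals_subset_mcVals hsub f
  have hne : (dlrVals G (ham G β h) Λ f).Nonempty :=
    ⟨_, _, gibbs_comp_extendC_mem_LPdlr G (ham G β h) Λ, rfl⟩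
  have hbdd := isBounded_mcVals G P Λ f
  exact ⟨csInf_le_csInf hbdd.bddBelow hne hvals, csSup_le_csSup hbdd.bddAbove hne hvals⟩

/-- If the local Markov chain `P` is reversible with respect to the Gibbs
distribution (`P_{x,xⁱ} = P_{xⁱ,x} e^{-∇ᵢH(x)}`), then `LP_{Λ,DLR} ⊆ LP_{Λ,MC}`;
consequently the MC bounds are weaker than the DLR bounds. -/
theorem LPdlr_subset_LPmc (G : SimpleGraph V) [DecidableRel G.Adj]
    (β : ℝ) (hβ : 0 ≤ β) (h : V → V → Bool → Bool → ℝ)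
    (hsym : ∀ i j a b, h i j a b = h i j b a) (hsym' : ∀ i j, h i j = h j i)
    (P : Config V → Config V → ℝ) (hP : IsLocalMC G P)
    (hrev : ∀ (x : Config V) (i : V),
      P x (flip x i) = P (flip x i) x * Real.exp (-(grad (ham G β h) i x)))
    (Λ : Finset V) :
    LPdlr G (ham G β h) Λ ⊆ LPmc G P Λ ∧
    ∀ f : Config V → ℝ, SupportedOn f ↑Λ →
      sInf (mcVals G P Λ f) ≤ sInf (dlrVals G (ham G β h) Λ f) ∧
      sSup (dlrVals G (ham G β h) Λ f) ≤ sSup (mcVals G P Λ f) :=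
  LPdlr_subset_LPmc_general G β h P hP hrev Λ

end GibbsLP
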